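/- arXiv:2604.24803 — 2 statements merged into one kernel-verified Lean document; each statement's English description precedes it below -/
import Mathlib

section
/- Let F : ℝ^d → ℝ be L-Lipschitz (L > 0) with respect to the Euclidean norm, let μ ∈ ℝ^d, let Σ ∈ ℝ^{d×d} be symmetric positive definite, and let q > 0. Suppose F(μ) ≥ c for some c > 0, and suppose the confinement condition ‖Σ‖_op ≤ c² / (4·L²·q) holds. If Θ is a random vector in ℝ^d with P[Θ ∈ T_q] = 1, where T_q is the trust region, then E[F(Θ)] ≥ c/2. -/
open MeasureTheory

/-- Squared Euclidean norm expression `‖x‖₂ = √(∑ xᵢ²)` on `Fin d → ℝ`. -/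
noncomputable def enorm2 {d : ℕ} (x : Fin d → ℝ) : ℝ := Real.sqrt (∑ i, x i ^ 2)

/-- Mahalanobis quadratic form `(θ − μ)ᵀ Σ⁻¹ (θ − μ)`. -/
noncomputable def mahal {d : ℕ} (S : Matrix (Fin d) (Fin d) ℝ) (μ θ : Fin d → ℝ) : ℝ :=
  dotProduct (θ - μ) (Matrix.mulVec S⁻¹ (θ - μ))

/-- The trust region `T_q = {θ : (θ − μ)ᵀ Σ⁻¹ (θ − μ) ≤ q}`. -/
def trustRegion {d : ℕ} (S : Matrix (Fin d) (Fin d) ℝ) (μ : Fin d → ℝ) (q : ℝ) :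
    Set (Fin d → ℝ) := {θ | mahal S μ θ ≤ q}

/-- The ℓ²→ℓ² operator norm of a matrix (its largest eigenvalue when PSD). -/
noncomputable def matOpNorm {d : ℕ} (S : Matrix (Fin d) (Fin d) ℝ) : ℝ :=
  ‖Matrix.toEuclideanCLM (𝕜 := ℝ) S‖

/-! On the trust region, Cauchy–Schwarz for the form of `Σ` at `θ - μ` and `Σ⁻¹ (θ - μ)` gives
`‖θ - μ‖² ≤ ‖Σ‖ (θ - μ)ᵀ Σ⁻¹ (θ - μ) ≤ ‖Σ‖ q ≤ (c / 2L)²`, so by the Lipschitz bound `F` stays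
within `c / 2` of `F μ ≥ c` there. Since `Θ` lies in the trust region almost surely, averaging
gives `E[F Θ] ≥ c / 2`. -/

open Matrix

theorem Matrix.PosSemidef.dotProduct_mulVec_sq_le {n : Type*} [Fintype n]
    {M : Matrix n n ℝ} (hM : M.PosSemidef) (x y : n → ℝ) :
    (x ⬝ᵥ M *ᵥ y) ^ 2 ≤ (x ⬝ᵥ M *ᵥ x) * (y ⬝ᵥ M *ᵥ y) := by
  let := M.toSeminormedAddCommGroup hM
  let := M.toInnerProductSpace hM
  have hinner : ∀ u v : n → ℝ, inner ℝ u v = u ⬝ᵥ M *ᵥ v := fun u v => by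
    change (M *ᵥ v) ⬝ᵥ star u = _
    rw [star_trivial, dotProduct_comm]
  simpa only [hinner, sq] using real_inner_mul_inner_self_le x y

theorem EuclideanSpace.real_inner_toLp_toLp {n : Type*} [Fintype n] (x y : n → ℝ) :
    inner ℝ (WithLp.toLp 2 x) (WithLp.toLp 2 y) = x ⬝ᵥ y := by
  rw [EuclideanSpace.inner_toLp_toLp, star_trivial, dotProduct_comm]

theorem enorm2_eq_norm_toLp {d : ℕ} (x : Fin d → ℝ) : enorm2 x = ‖WithLp.toLp 2 x‖ := by
  simp only [enorm2, EuclideanSpace.norm_eq, Real.norm_eq_abs, sq_abs]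

theorem enorm2_eq_sqrt_dotProduct_self {d : ℕ} (x : Fin d → ℝ) : enorm2 x = √(x ⬝ᵥ x) := by
  simp only [enorm2, dotProduct, sq]

theorem continuous_of_abs_sub_le_mul_enorm2 {d : ℕ} {F : (Fin d → ℝ) → ℝ} {L : ℝ}
    (hF : ∀ x y, |F x - F y| ≤ L * enorm2 (x - y)) : Continuous F := by
  have hLip : LipschitzWith L.toNNReal (F ∘ WithLp.ofLp (p := 2)) :=
    LipschitzWith.of_dist_le' fun x y => by
      simpa only [Function.comp_apply, Real.dist_eq, dist_eq_norm, Real.norm_eq_abs,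
        enorm2_eq_norm_toLp, ← WithLp.ofLp_sub, WithLp.toLp_ofLp] using hF x.ofLp y.ofLp
  exact hLip.continuous.comp (PiLp.continuous_toLp 2 _)

theorem dotProduct_mulVec_self_le_matOpNorm_mul {d : ℕ} (S : Matrix (Fin d) (Fin d) ℝ)
    (x : Fin d → ℝ) : x ⬝ᵥ S *ᵥ x ≤ matOpNorm S * (x ⬝ᵥ x) := by
  set v := WithLp.toLp 2 x
  have hquad : x ⬝ᵥ S *ᵥ x = inner ℝ v (toEuclideanCLM (𝕜 := ℝ) S v) := by
    rw [toEuclideanCLM_toLp, EuclideanSpace.real_inner_toLp_toLp]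
  have hsq : x ⬝ᵥ x = ‖v‖ ^ 2 := by
    rw [← real_inner_self_eq_norm_sq, EuclideanSpace.real_inner_toLp_toLp]
  calc x ⬝ᵥ S *ᵥ x ≤ ‖v‖ * ‖toEuclideanCLM (𝕜 := ℝ) S v‖ := hquad ▸ real_inner_le_norm _ _
    _ ≤ ‖v‖ * (matOpNorm S * ‖v‖) := by gcongr; exact (toEuclideanCLM (𝕜 := ℝ) S).le_opNorm v
    _ = matOpNorm S * (x ⬝ᵥ x) := by rw [hsq]; ring

theorem Matrix.PosDef.dotProduct_self_le_matOpNorm_mul {d : ℕ} {S : Matrix (Fin d) (Fin d) ℝ}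
    (hS : S.PosDef) (x : Fin d → ℝ) : x ⬝ᵥ x ≤ matOpNorm S * (x ⬝ᵥ S⁻¹ *ᵥ x) := by
  have hx : S *ᵥ (S⁻¹ *ᵥ x) = x := by
    rw [mulVec_mulVec, mul_nonsing_inv _ ((isUnit_iff_isUnit_det S).1 hS.isUnit), one_mulVec]
  have hcs := hS.posSemidef.dotProduct_mulVec_sq_le x (S⁻¹ *ᵥ x)
  rw [hx, dotProduct_comm (S⁻¹ *ᵥ x)] at hcs
  have hinv : 0 ≤ x ⬝ᵥ S⁻¹ *ᵥ x := by simpa using hS.inv.posSemidef.dotProduct_mulVec_nonneg x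
  have key : (x ⬝ᵥ x) * (x ⬝ᵥ x) ≤ (x ⬝ᵥ x) * (matOpNorm S * (x ⬝ᵥ S⁻¹ *ᵥ x)) :=
    calc (x ⬝ᵥ x) * (x ⬝ᵥ x) ≤ (x ⬝ᵥ S *ᵥ x) * (x ⬝ᵥ S⁻¹ *ᵥ x) := by rw [← sq]; exact hcs
      _ ≤ (matOpNorm S * (x ⬝ᵥ x)) * (x ⬝ᵥ S⁻¹ *ᵥ x) := by
        gcongr; exact dotProduct_mulVec_self_le_matOpNorm_mul S x
      _ = (x ⬝ᵥ x) * (matOpNorm S * (x ⬝ᵥ S⁻¹ *ᵥ x)) := by ring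
  have hxx : 0 ≤ x ⬝ᵥ x := by simpa using dotProduct_star_self_nonneg x
  rcases hxx.eq_or_lt with hzero | hpos
  · rw [← hzero]
    exact mul_nonneg (norm_nonneg _) hinv
  · exact le_of_mul_le_mul_left key hpos

theorem enorm2_sub_le_of_mem_trustRegion {d : ℕ} {S : Matrix (Fin d) (Fin d) ℝ} (hS : S.PosDef)
    {μ θ : Fin d → ℝ} {q : ℝ} (hθ : θ ∈ trustRegion S μ q) :
    enorm2 (θ - μ) ≤ √(matOpNorm S * q) := by
  rw [enorm2_eq_sqrt_dotProduct_self]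
  gcongr
  calc (θ - μ) ⬝ᵥ (θ - μ) ≤ matOpNorm S * mahal S μ θ := hS.dotProduct_self_le_matOpNorm_mul _
    _ ≤ matOpNorm S * q := mul_le_mul_of_nonneg_left hθ (norm_nonneg _)

theorem isClosed_trustRegion {d : ℕ} (S : Matrix (Fin d) (Fin d) ℝ) (μ : Fin d → ℝ) (q : ℝ) :
    IsClosed (trustRegion S μ q) :=
  isClosed_le (by unfold mahal; fun_prop) continuous_const

theorem MeasureTheory.sub_le_integral_of_ae_abs_sub_le {Ω : Type*} [MeasurableSpace Ω]
    {P : Measure Ω} [IsProbabilityMeasure P] {f : Ω → ℝ} {a r : ℝ}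
    (hf : AEStronglyMeasurable f P) (h : ∀ᵐ ω ∂P, |f ω - a| ≤ r) : a - r ≤ ∫ ω, f ω ∂P := by
  have hint : Integrable f P := by
    refine (integrable_const (|a| + r)).mono' hf (h.mono fun ω hω => ?_)
    rw [Real.norm_eq_abs]
    linarith [abs_sub_abs_le_abs_sub (f ω) a]
  calc a - r = ∫ _, (a - r) ∂P := by simp
    _ ≤ ∫ ω, f ω ∂P := integral_mono_ae (integrable_const _) hint
        (h.mono fun ω hω => by linarith [(abs_le.1 hω).1])

/-- under the variance-confinement condition `‖Σ‖_op ≤ c²/(4L²q)`,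
any random vector supported in the trust region has `E[F(Θ)] ≥ c/2`. -/
theorem trust_region_expected_objective_confinement
    {d : ℕ} (L : ℝ) (hL : 0 < L) (F : (Fin d → ℝ) → ℝ)
    (hLip : ∀ x y, |F x - F y| ≤ L * enorm2 (x - y))
    (μv : Fin d → ℝ) (S : Matrix (Fin d) (Fin d) ℝ) (hS : S.PosDef)
    (q : ℝ) (hq : 0 < q) (c : ℝ) (hc : 0 < c) (hcF : c ≤ F μv)
    (hconf : matOpNorm S ≤ c ^ 2 / (4 * L ^ 2 * q))
    {Ω : Type*} [MeasurableSpace Ω] (P : Measure Ω) [IsProbabilityMeasure P]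
    (Θ : Ω → (Fin d → ℝ)) (hΘ : Measurable Θ)
    (hsupp : P {ω | Θ ω ∈ trustRegion S μv q} = 1) :
    c / 2 ≤ ∫ ω, F (Θ ω) ∂P := by
  have hradius : matOpNorm S * q ≤ (c / (2 * L)) ^ 2 := by
    have hconf' := (le_div_iff₀ (by positivity)).1 hconf
    rw [div_pow, le_div_iff₀ (by positivity)]
    linarith
  have hclose : ∀ θ ∈ trustRegion S μv q, |F θ - F μv| ≤ c / 2 := fun θ hθ =>
    calc |F θ - F μv| ≤ L * enorm2 (θ - μv) := hLip θ μv
      _ ≤ L * (c / (2 * L)) := by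
        gcongr
        exact (enorm2_sub_le_of_mem_trustRegion hS hθ).trans
          ((Real.sqrt_le_left (by positivity)).2 hradius)
      _ = c / 2 := by field_simp
  have hae : ∀ᵐ ω ∂P, Θ ω ∈ trustRegion S μv q := by
    have hmeas := (isClosed_trustRegion S μv q).measurableSet.preimage hΘ
    rw [ae_iff_measure_eq hmeas.nullMeasurableSet, hsupp, measure_univ]
  have hmean := sub_le_integral_of_ae_abs_sub_le (f := fun ω => F (Θ ω))
    ((continuous_of_abs_sub_le_mul_enorm2 hLip).measurable.comp hΘ).aestronglyMeasurable
    (hae.mono fun ω hω => hclose _ hω)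
  linarith
end

section
/- Let M ≥ 1 be a natural number, let α ∈ (0, 1), and let S₁, …, S_{M+1} be real-valued random variables whose joint distribution is invariant under every permutation of the indices {1, …, M+1} (exchangeability). Let k = ⌈(M+1)(1−α)⌉, assume k ≤ M, and let q̂ denote the k-th smallest value among S₁, …, S_M. Then P[S_{M+1} ≤ q̂] ≥ k/(M+1) ≥ 1 − α. -/
/-! Write `rank v j` for the number of coordinates of `v` strictly below `v j`. The event
`S_{M+1} ≤ q̂` is `rank S (M+1) < k`. For every vector, every index whose value is at most the
`k`-th smallest value has rank `< k`, so at least `k` of the `M+1` events `{rank S j < k}` occur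
and their probabilities sum to at least `k`. Exchangeability makes these probabilities equal,
hence each is at least `k/(M+1)`. -/

open MeasureTheory

/-- The `k`-th smallest value (1-indexed `k`-th order statistic) of the scores
`s 0, …, s (M−1)`, obtained by sorting the list of scores. -/
noncomputable def kthSmallest {M : ℕ} (k : ℕ) (s : Fin M → ℝ) : ℝ :=
  (Multiset.sort (↑(List.ofFn s) : Multiset ℝ) (· ≤ ·)).getD (k - 1) 0

open Finset
open scoped ENNReal

namespace List

variable {α : Type*} [Preorder α] {l : List α}

theorem SortedLE.countP_lt_getElem_le [DecidableLT α] (hl : l.SortedLE) (i : ℕ)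
    (hi : i < l.length) :
    l.countP (fun a => a < l[i]) ≤ i := by
  have hdrop : (l.drop i).countP (fun a => a < l[i]) = 0 := by
    refine countP_eq_zero.mpr fun a ha => ?_
    obtain ⟨j, hj, rfl⟩ := mem_drop_iff_getElem.mp ha
    simpa using (hl.getElem_le_getElem_of_le (Nat.le_add_right i j)).not_gt
  calc l.countP (fun a => a < l[i])
      = (l.take i).countP (fun a => a < l[i]) + (l.drop i).countP (fun a => a < l[i]) := by
        rw [← countP_append, take_append_drop]
    _ ≤ i := by
        rw [hdrop, add_zero]
        exact (countP_le_length).trans (length_take_le i l)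

theorem SortedLE.lt_countP_le_getElem [DecidableLE α] (hl : l.SortedLE) (i : ℕ)
    (hi : i < l.length) :
    i < l.countP (fun a => a ≤ l[i]) := by
  have htake : (l.take (i + 1)).countP (fun a => a ≤ l[i]) = i + 1 := by
    rw [countP_eq_length.mpr, length_take_of_le hi]
    intro a ha
    obtain ⟨j, hj, rfl⟩ := mem_take_iff_getElem.mp ha
    simpa using hl.getElem_le_getElem_of_le (by omega)
  exact htake.symm.trans_le (take_sublist (i + 1) l).countP_le

end List

section OrderStatistic

variable {M k : ℕ} (s : Fin M → ℝ)

theorem card_filter_eq_countP_sort (p : ℝ → Prop) [DecidablePred p] :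
    #{i | p (s i)} =
      (Multiset.sort (↑(List.ofFn s) : Multiset ℝ) (· ≤ ·)).countP (fun a => p a) := by
  rw [← Multiset.coe_countP, Multiset.sort_eq, ← Fin.univ_val_map, Multiset.countP_map,
    card_def, filter_val]

theorem kthSmallest_eq_getElem_sort (hk : 1 ≤ k) (hkM : k ≤ M) :
    ∃ h, kthSmallest k s =
      (Multiset.sort (↑(List.ofFn s) : Multiset ℝ) (· ≤ ·))[k - 1]'h := by
  have h : k - 1 < (Multiset.sort (↑(List.ofFn s) : Multiset ℝ) (· ≤ ·)).length := by
    simp only [Multiset.length_sort, Multiset.coe_card, List.length_ofFn]; omega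
  exact ⟨h, List.getD_eq_getElem _ _ h⟩

theorem card_filter_lt_kthSmallest_lt (hk : 1 ≤ k) (hkM : k ≤ M) :
    #{i | s i < kthSmallest k s} < k := by
  obtain ⟨h, hq⟩ := kthSmallest_eq_getElem_sort s hk hkM
  rw [card_filter_eq_countP_sort s (· < kthSmallest k s), hq]
  have := List.SortedLE.countP_lt_getElem_le (Multiset.pairwise_sort _ _).sortedLE (k - 1) h
  omega

theorem le_card_filter_le_kthSmallest (hk : 1 ≤ k) (hkM : k ≤ M) :
    k ≤ #{i | s i ≤ kthSmallest k s} := by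
  obtain ⟨h, hq⟩ := kthSmallest_eq_getElem_sort s hk hkM
  rw [card_filter_eq_countP_sort s (· ≤ kthSmallest k s), hq]
  have := List.SortedLE.lt_countP_le_getElem (Multiset.pairwise_sort _ _).sortedLE (k - 1) h
  omega

theorem le_kthSmallest_iff (hk : 1 ≤ k) (hkM : k ≤ M) (x : ℝ) :
    x ≤ kthSmallest k s ↔ #{i | s i < x} < k := by
  constructor
  · intro hx
    refine lt_of_le_of_lt (card_le_card fun i => ?_) (card_filter_lt_kthSmallest_lt s hk hkM)
    simpa using fun h => h.trans_le hx
  · intro hcard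
    by_contra! hx
    refine (le_card_filter_le_kthSmallest s hk hkM).not_gt (lt_of_le_of_lt ?_ hcard)
    refine card_le_card fun i => ?_
    simpa using fun h => h.trans_lt hx

end OrderStatistic

section Rank

variable {ι : Type*} [Fintype ι]

def rank {α : Type*} [LT α] [DecidableLT α] (v : ι → α) (j : ι) : ℕ := #{i | v i < v j}

theorem rank_comp_perm {α : Type*} [LT α] [DecidableLT α] (v : ι → α) (e : Equiv.Perm ι)
    (j : ι) :
    rank (v ∘ e) j = rank v (e j) :=
  card_equiv e (by simp)

theorem le_card_filter_rank_lt {N k : ℕ} (v : Fin N → ℝ) (hkN : k ≤ N) :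
    k ≤ #{j | rank v j < k} := by
  obtain rfl | hk := Nat.eq_zero_or_pos k
  · exact Nat.zero_le _
  refine (le_card_filter_le_kthSmallest v hk hkN).trans (card_le_card fun j => ?_)
  simp only [mem_filter, mem_univ, true_and]
  exact (le_kthSmallest_iff v hk hkN (v j)).mp

theorem rank_last_eq_card_filter_init {M : ℕ} (v : Fin (M + 1) → ℝ) :
    rank v (Fin.last M) = #{i | Fin.init v i < v (Fin.last M)} := by
  rw [rank, card_filter, card_filter, Fin.sum_univ_castSucc,
    if_neg (lt_irrefl _), add_zero]
  rfl

end Rank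

section Exchangeable

variable {ι : Type*} [Fintype ι]

theorem measurable_rank (j : ι) : Measurable fun v : ι → ℝ => rank v j := by
  simp_rw [rank, card_filter]
  exact Finset.measurable_sum _ fun i _ => Measurable.ite
    (measurableSet_lt (measurable_pi_apply i) (measurable_pi_apply j)) measurable_const
    measurable_const

theorem measurableSet_rank_lt (j : ι) (k : ℕ) : MeasurableSet {v : ι → ℝ | rank v j < k} :=
  measurable_rank j measurableSet_Iio

theorem measure_rank_lt_eq {μ : Measure (ι → ℝ)}
    (hμ : ∀ e : Equiv.Perm ι, μ.map (fun v => v ∘ e) = μ) (k : ℕ) (j j' : ι) :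
    μ {v | rank v j < k} = μ {v | rank v j' < k} := by
  classical
  have hpre : (fun v : ι → ℝ => v ∘ Equiv.swap j' j) ⁻¹' {v | rank v j' < k} =
      {v | rank v j < k} := by
    ext v
    simp [rank_comp_perm]
  rw [← hpre, ← Measure.map_apply (by fun_prop) (measurableSet_rank_lt j' k), hμ]

theorem le_card_mul_measure_rank_lt {N k : ℕ} {μ : Measure (Fin N → ℝ)}
    (hμ : ∀ e : Equiv.Perm (Fin N), μ.map (fun v => v ∘ e) = μ) (hkN : k ≤ N) (j : Fin N) :
    k * μ Set.univ ≤ N * μ {v | rank v j < k} := by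
  calc (k : ℝ≥0∞) * μ Set.univ = ∫⁻ _, (k : ℝ≥0∞) ∂μ := (lintegral_const _).symm
    _ ≤ ∫⁻ v, ∑ j', {v | rank v j' < k}.indicator 1 v ∂μ := by
        refine lintegral_mono fun v => ?_
        simp only [Set.indicator_apply, Set.mem_ofPred_eq, Pi.one_apply,
          ← natCast_card_filter]
        exact_mod_cast le_card_filter_rank_lt v hkN
    _ = ∑ j', μ {v | rank v j' < k} := by
        rw [lintegral_finsetSum _ fun j' _ =>
          measurable_one.indicator (measurableSet_rank_lt j' k)]
        simp only [lintegral_indicator_one (measurableSet_rank_lt _ k)]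
    _ = N * μ {v | rank v j < k} := by
        simp [measure_rank_lt_eq hμ k _ j]

end Exchangeable

theorem le_kthSmallest_init_iff_rank_last_lt {M k : ℕ} (v : Fin (M + 1) → ℝ) (hk : 1 ≤ k)
    (hkM : k ≤ M) : v (Fin.last M) ≤ kthSmallest k (Fin.init v) ↔ rank v (Fin.last M) < k := by
  rw [le_kthSmallest_iff _ hk hkM, rank_last_eq_card_filter_init]

theorem natCast_le_mul_measure_le_kthSmallest {Ω : Type*} [MeasurableSpace Ω] (P : Measure Ω)
    [IsProbabilityMeasure P] {M k : ℕ} (S : Fin (M + 1) → Ω → ℝ) (hSm : ∀ i, Measurable (S i))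
    (hexch : ∀ e : Equiv.Perm (Fin (M + 1)),
      P.map (fun ω => fun i => S (e i) ω) = P.map (fun ω => fun i => S i ω))
    (hkM : k ≤ M) :
    (k : ℝ≥0∞) ≤
      (M + 1) *
        P {ω | S (Fin.last M) ω ≤ kthSmallest k (fun i : Fin M => S (Fin.castSucc i) ω)} := by
  obtain rfl | hk := Nat.eq_zero_or_pos k
  · simp
  set F : Ω → Fin (M + 1) → ℝ := fun ω i => S i ω
  have hF : Measurable F := measurable_pi_lambda F hSm
  have hinv : ∀ e : Equiv.Perm (Fin (M + 1)), (P.map F).map (fun v => v ∘ e) = P.map F :=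
    fun e => by rw [Measure.map_map (by fun_prop) hF]; exact hexch e
  have : IsProbabilityMeasure (P.map F) := Measure.isProbabilityMeasure_map hF.aemeasurable
  have hevent : {ω | S (Fin.last M) ω ≤ kthSmallest k (fun i : Fin M => S (Fin.castSucc i) ω)} =
      F ⁻¹' {v | rank v (Fin.last M) < k} := by
    ext ω
    exact le_kthSmallest_init_iff_rank_last_lt (F ω) hk hkM
  rw [hevent, ← Measure.map_apply hF (measurableSet_rank_lt _ _)]
  simpa using le_card_mul_measure_rank_lt hinv (hkM.trans M.le_succ) (Fin.last M)

theorem split_conformal_coverage_general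
    {Ω : Type*} [MeasurableSpace Ω] (P : Measure Ω) [IsProbabilityMeasure P]
    (M : ℕ) (α : ℝ)
    (S : Fin (M + 1) → Ω → ℝ) (hSm : ∀ i, Measurable (S i))
    (hexch : ∀ e : Equiv.Perm (Fin (M + 1)),
      P.map (fun ω => fun i => S (e i) ω) = P.map (fun ω => fun i => S i ω))
    (k : ℕ) (hk : k = ⌈((M : ℝ) + 1) * (1 - α)⌉₊) (hkM : k ≤ M) :
    ENNReal.ofReal ((k : ℝ) / ((M : ℝ) + 1)) ≤
        P {ω | S (Fin.last M) ω ≤ kthSmallest k (fun i : Fin M => S (Fin.castSucc i) ω)} ∧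
      1 - α ≤ (k : ℝ) / ((M : ℝ) + 1) := by
  constructor
  · rw [← Nat.cast_succ, ENNReal.ofReal_div_of_pos (by positivity), ENNReal.ofReal_natCast,
      ENNReal.ofReal_natCast, ENNReal.div_le_iff (by simp) (by simp), mul_comm]
    exact_mod_cast natCast_le_mul_measure_le_kthSmallest P S hSm hexch hkM
  · rw [hk, le_div_iff₀ (by positivity)]
    linarith [Nat.le_ceil (((M : ℝ) + 1) * (1 - α))]

/-- split conformal coverage. For exchangeable scores `S₁, …, S_{M+1}` and
`k = ⌈(M+1)(1−α)⌉ ≤ M`, letting `q̂` be the `k`-th smallest of the first `M` scores,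
one has `P[S_{M+1} ≤ q̂] ≥ k/(M+1) ≥ 1 − α`. -/
theorem split_conformal_coverage
    {Ω : Type*} [MeasurableSpace Ω] (P : Measure Ω) [IsProbabilityMeasure P]
    (M : ℕ) (hM : 1 ≤ M) (α : ℝ) (hα : α ∈ Set.Ioo (0 : ℝ) 1)
    (S : Fin (M + 1) → Ω → ℝ) (hSm : ∀ i, Measurable (S i))
    (hexch : ∀ e : Equiv.Perm (Fin (M + 1)),
      P.map (fun ω => fun i => S (e i) ω) = P.map (fun ω => fun i => S i ω))
    (k : ℕ) (hk : k = ⌈((M : ℝ) + 1) * (1 - α)⌉₊) (hkM : k ≤ M) :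
    ENNReal.ofReal ((k : ℝ) / ((M : ℝ) + 1)) ≤
        P {ω | S (Fin.last M) ω ≤ kthSmallest k (fun i : Fin M => S (Fin.castSucc i) ω)} ∧
      1 - α ≤ (k : ℝ) / ((M : ℝ) + 1) :=
  split_conformal_coverage_general P M α S hSm hexch k hk hkM
end
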